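/- Let R, S be commutative rings with R an integral domain of the form R = A ⊗ B for k-algebras A, B (all k-algebras over a field k), let f ∈ B be a non-zero-divisor, and let F ∈ A ⊗ B_f (localization in the second factor). Suppose F can be written so that for a set X' of k-algebra homomorphisms A → k whose common kernel contains no nonzero element of the span of the A-components of F, each specialization of F at x ∈ X' lies in B ⊆ B_f. Then F ∈ A ⊗ B. -/

import Mathlib

/-!
The `A`-components of `F` span a finite-dimensional subspace `V`, and by separation the
restrictions to `V` of the points of `X'` span its dual. The slice `(φ ⊗ id) F` of `F ∈ V ⊗ B_f`
by a linear form `φ` on `V` is linear in `φ` and lies in `B` for the points of `X'`, hence for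
every `φ`. Expanding `F = Σⱼ eⱼ ⊗ (eⱼ* ⊗ id) F` in a basis `(eⱼ)` of `V` then shows `F ∈ V ⊗ B`.
-/

open scoped TensorProduct
open LinearMap Submodule

namespace TensorProduct

variable {k M N P : Type*} [Field k] [AddCommGroup M] [Module k M]
  [AddCommGroup N] [Module k N] [AddCommGroup P] [Module k P]

def slice : M ⊗[k] N →ₗ[k] Module.Dual k M →ₗ[k] N :=
  (LinearMap.rTensorHom N).flip.compr₂ (TensorProduct.lid k N).toLinearMap

theorem slice_apply (t : M ⊗[k] N) (φ : Module.Dual k M) :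
    slice t φ = TensorProduct.lid k N (φ.rTensor N t) :=
  rfl

@[simp]
theorem slice_tmul (m : M) (n : N) (φ : Module.Dual k M) : slice (m ⊗ₜ n) φ = φ m • n := by
  rw [slice_apply, rTensor_tmul, lid_tmul]

theorem sum_tmul_slice_coord {ι : Type*} [Fintype ι] (e : Module.Basis ι k M) (t : M ⊗[k] N) :
    ∑ i, e i ⊗ₜ slice t (e.coord i) = t := by
  induction t using TensorProduct.induction_on with
  | zero => simp
  | tmul m n =>
    simp_rw [slice_tmul, ← TensorProduct.smul_tmul, ← TensorProduct.sum_tmul]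
    rw [← e.sum_repr m]
    simp [Module.Basis.coord_apply]
  | add t t' ht ht' => simp [TensorProduct.tmul_add, Finset.sum_add_distrib, ht, ht']

theorem mem_range_lTensor_of_forall_slice_mem [FiniteDimensional k M] (g : P →ₗ[k] N)
    (t : M ⊗[k] N) (h : ∀ φ, slice t φ ∈ range g) : t ∈ range (g.lTensor M) := by
  rw [← sum_tmul_slice_coord (Module.finBasis k M) t]
  refine Submodule.sum_mem _ fun i _ => ?_
  obtain ⟨p, hp⟩ := h ((Module.finBasis k M).coord i)
  exact ⟨Module.finBasis k M i ⊗ₜ p, by rw [lTensor_tmul, hp]⟩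

theorem sum_tmul_mem_range_lTensor {ι : Type*} [Fintype ι] (g : P →ₗ[k] N)
    (a : ι → M) (b : ι → N) (X : Set (Module.Dual k M))
    (hsep : ∀ v ∈ span k (Set.range a), (∀ x ∈ X, x v = 0) → v = 0)
    (hspec : ∀ x ∈ X, ∑ i, x (a i) • b i ∈ range g) :
    ∑ i, a i ⊗ₜ[k] b i ∈ range (g.lTensor M) := by
  set V := span k (Set.range a)
  have : FiniteDimensional k V := FiniteDimensional.span_of_finite k (Set.finite_range a)
  let tV : V ⊗[k] N := ∑ i, (⟨a i, subset_span ⟨i, rfl⟩⟩ : V) ⊗ₜ b i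
  have hspan : span k ((· ∘ₗ V.subtype) '' X) = ⊤ := by
    refine Submodule.span_eq_top_of_ne_zero fun v hv => ?_
    by_contra! hX
    exact hv (Subtype.ext (hsep v v.2 fun x hx => hX _ ⟨x, hx, rfl⟩))
  have hslice : ∀ φ, slice tV φ ∈ range g := by
    suffices span k ((· ∘ₗ V.subtype) '' X) ≤ (range g).comap (slice tV) from
      fun φ => this (hspan ▸ mem_top)
    rw [span_le]
    rintro _ ⟨x, hx, rfl⟩
    simpa [tV] using hspec x hx
  obtain ⟨s, hs⟩ := mem_range_lTensor_of_forall_slice_mem g tV hslice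
  refine ⟨V.subtype.rTensor P s, ?_⟩
  rw [← LinearMap.comp_apply, lTensor_comp_rTensor, ← rTensor_comp_lTensor, comp_apply, hs]
  simp [tV]

end TensorProduct

theorem stmt_3_general (k A B Bf : Type*) [Field k] [CommRing A] [CommRing B] [CommRing Bf]
    [Algebra k A] [Algebra k B] [Algebra k Bf] [Algebra B Bf] [IsScalarTower k B Bf]
    (n : ℕ) (a : Fin n → A) (b : Fin n → Bf)
    (X' : Set (A →ₐ[k] k))
    (hsep : ∀ a' ∈ Submodule.span k (Set.range a), (∀ x ∈ X', x a' = 0) → a' = 0)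
    (hspec : ∀ x ∈ X', (∑ i, x (a i) • b i) ∈ (algebraMap B Bf).range) :
    (∑ i, a i ⊗ₜ[k] b i) ∈
      (Algebra.TensorProduct.map (AlgHom.id k A) (IsScalarTower.toAlgHom k B Bf)).range := by
  obtain ⟨s, hs⟩ := TensorProduct.sum_tmul_mem_range_lTensor
    (IsScalarTower.toAlgHom k B Bf).toLinearMap a b ((fun x => x.toLinearMap) '' X')
    (fun v hv hX => hsep v hv fun x hx => hX _ ⟨x, hx, rfl⟩)
    (by rintro _ ⟨x, hx, rfl⟩; exact hspec x hx)
  exact ⟨s, hs⟩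

theorem stmt_3 (k A B Bf : Type*) [Field k] [CommRing A] [CommRing B] [CommRing Bf]
    [Algebra k A] [Algebra k B] [Algebra k Bf] [Algebra B Bf] [IsScalarTower k B Bf]
    [IsDomain (A ⊗[k] B)]
    (f : B) (hf : f ∈ nonZeroDivisors B) [IsLocalization.Away f Bf]
    (n : ℕ) (a : Fin n → A) (b : Fin n → Bf)
    (X' : Set (A →ₐ[k] k))
    (hsep : ∀ a' ∈ Submodule.span k (Set.range a), (∀ x ∈ X', x a' = 0) → a' = 0)
    (hspec : ∀ x ∈ X', (∑ i, x (a i) • b i) ∈ (algebraMap B Bf).range) :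
    (∑ i, a i ⊗ₜ[k] b i) ∈
      (Algebra.TensorProduct.map (AlgHom.id k A) (IsScalarTower.toAlgHom k B Bf)).range :=
  stmt_3_general k A B Bf n a b X' hsep hspec
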